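/- arXiv:2405.18619 — 5 statements merged into one kernel-verified Lean document; each statement's English description precedes it below -/
import Mathlib

section
/- Let 0 < α < 1, η ≥ 0, and let λ ∈ ℂ satisfy Re λ + η > 0 or Im λ ≠ 0. Then the improper integral over the real line satisfies ∫_ℝ |ξ|^{2α−1} / (ξ² + η + λ) dξ = (π / sin(απ)) · (η + λ)^{α−1}, where (η + λ)^{α−1} denotes the principal branch of the complex power. -/
open MeasureTheory

section Stmt0Aux
open Set Filter


lemma integrable_if_bound {β γ c b T : ℝ} (hβ : -1 < β) (hγ : γ < -1) (hT : 0 < T) :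
    IntegrableOn (fun t : ℝ => if t ≤ T then t ^ β * c else b * t ^ γ) (Ioi 0) := by
  have h1 : IntegrableOn (fun t : ℝ => t ^ β * c) (Ioc 0 T) := by
    have h := intervalIntegral.intervalIntegrable_rpow' (a := 0) (b := T) hβ
    rw [intervalIntegrable_iff_integrableOn_Ioc_of_le hT.le] at h
    exact h.mul_const c
  have h2 : IntegrableOn (fun t : ℝ => b * t ^ γ) (Ioi T) :=
    (integrableOn_Ioi_rpow_of_lt hγ hT).const_mul b
  have hU : Ioi (0:ℝ) = Ioc 0 T ∪ Ioi T := (Ioc_union_Ioi_eq_Ioi hT.le).symm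
  rw [hU]
  apply IntegrableOn.union
  · exact h1.congr_fun (fun t ht => by simp [ht.2]) measurableSet_Ioc
  · exact h2.congr_fun (fun t ht => by simp [not_le.mpr (mem_Ioi.mp ht)]) measurableSet_Ioi

lemma exists_delta {z : ℂ} (hz : z ∈ Complex.slitPlane) :
    ∃ δ : ℝ, 0 < δ ∧ ∀ t : ℝ, 0 ≤ t → ∀ w ∈ Metric.ball z δ, δ ≤ ‖(t:ℂ) + w‖ := by
  set S : Set ℂ := Complex.ofReal '' Ici 0 with hS
  have hSc : IsClosed S := (Complex.isometry_ofReal.isClosedEmbedding.isClosedMap _ isClosed_Ici)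
  have hzS : -z ∉ S := by
    rintro ⟨t, ht, h⟩
    rw [Complex.mem_slitPlane_iff] at hz
    have h1 : z.re = -t := by
      have := congrArg Complex.re h; simp at this; linarith
    have h2 : z.im = 0 := by
      have := congrArg Complex.im h; simp at this; linarith
    rcases hz with h3 | h3
    · rw [h1] at h3; linarith [mem_Ici.mp ht]
    · exact h3 h2
  have hne : S.Nonempty := ⟨0, 0, mem_Ici.mpr le_rfl, by simp⟩
  have hd : 0 < Metric.infDist (-z) S := by
    rw [← hSc.notMem_iff_infDist_pos hne]; exact hzS
  refine ⟨Metric.infDist (-z) S / 2, by linarith, fun t ht w hw => ?_⟩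
  have h1 : Metric.infDist (-z) S ≤ dist ((t:ℂ)) (-z) := by
    rw [dist_comm]; exact Metric.infDist_le_dist_of_mem ⟨t, ht, rfl⟩
  have h2 : dist ((t:ℂ)) (-z) ≤ dist ((t:ℂ)) (-w) + dist (-w) (-z) := dist_triangle _ _ _
  have h3 : dist (-w) (-z) = dist w z := dist_neg_neg _ _
  have h4 : dist ((t:ℂ)) (-w) = ‖(t:ℂ) + w‖ := by rw [dist_eq_norm]; ring_nf
  have h5 : dist w z < Metric.infDist (-z) S / 2 := hw
  rw [h4, h3] at h2; linarith
lemma norm_div_le_aux {t r : ℝ} (ht : 0 < t) {d : ℂ} {m : ℝ} (hm : 0 < m) (hd : m ≤ ‖d‖) :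
    ‖((t ^ r : ℝ) : ℂ) / d‖ ≤ t ^ r * m⁻¹ := by
  rw [norm_div, Complex.norm_real, Real.norm_eq_abs, abs_of_nonneg (Real.rpow_nonneg ht.le r), div_eq_mul_inv]
  exact mul_le_mul_of_nonneg_left (inv_anti₀ hm hd) (Real.rpow_nonneg ht.le r)

lemma norm_lower {t : ℝ} (z : ℂ) (h : 2 * ‖z‖ ≤ t) : t / 2 ≤ ‖(t:ℂ) + z‖ := by
  have h1 : ‖(t:ℂ)‖ ≤ ‖(t:ℂ) + z‖ + ‖z‖ := by
    calc ‖(t:ℂ)‖ = ‖(t:ℂ) + z + -z‖ := by ring_nf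
    _ ≤ ‖(t:ℂ) + z‖ + ‖-z‖ := norm_add_le _ _
    _ = ‖(t:ℂ) + z‖ + ‖z‖ := by rw [norm_neg]
  have h2 : 0 ≤ ‖z‖ := norm_nonneg _
  rw [Complex.norm_real, Real.norm_eq_abs] at h1
  have : t ≤ |t| := le_abs_self t
  linarith
lemma integrableOn_A {α : ℝ} (hα0 : 0 < α) (hα1 : α < 1) {z : ℂ} (hz : z ∈ Complex.slitPlane) :
    IntegrableOn (fun t : ℝ => ((t ^ (α-1) : ℝ) : ℂ) / ((t:ℂ) + z)) (Ioi 0) := by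
  obtain ⟨δ, hδ, hb⟩ := exists_delta hz
  have hzb : z ∈ Metric.ball z δ := Metric.mem_ball_self hδ
  set T : ℝ := 2 * (‖z‖ + δ) with hTdef
  have hT : 0 < T := by positivity
  have hmeas : AEStronglyMeasurable (fun t : ℝ => ((t ^ (α-1) : ℝ) : ℂ) / ((t:ℂ) + z))
      (volume.restrict (Ioi 0)) := by
    apply ContinuousOn.aestronglyMeasurable ?_ measurableSet_Ioi
    apply ContinuousOn.div
    · exact Complex.continuous_ofReal.comp_continuousOn
        (continuousOn_id.rpow_const (fun t ht => Or.inl (ne_of_gt ht)))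
    · exact (Complex.continuous_ofReal.add continuous_const).continuousOn
    · intro t ht
      have := hb t (le_of_lt ht) z hzb
      intro h0; rw [h0, norm_zero] at this; linarith
  apply Integrable.mono' (integrable_if_bound (β := α-1) (γ := α-2) (c := δ⁻¹) (b := 2)
    (by linarith) (by linarith) hT) hmeas
  rw [ae_restrict_iff' measurableSet_Ioi]
  apply ae_of_all
  intro t ht
  have ht0 : (0:ℝ) < t := ht
  by_cases hle : t ≤ T
  · rw [if_pos hle]
    exact norm_div_le_aux ht0 hδ (hb t ht0.le z hzb)
  · rw [if_neg hle]
    push_neg at hle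
    have h2z : 2 * ‖z‖ ≤ t := by
      have := norm_nonneg z; rw [hTdef] at hle; linarith
    have hlow := norm_lower z h2z
    have hb2 : ‖((t ^ (α-1) : ℝ) : ℂ) / ((t:ℂ) + z)‖ ≤ t ^ (α-1) * (t/2)⁻¹ :=
      norm_div_le_aux ht0 (by linarith) hlow
    have : t ^ (α-1) * (t/2)⁻¹ = 2 * t ^ (α-2) := by
      rw [show α - 2 = (α-1) + (-1) by ring, Real.rpow_add ht0, Real.rpow_neg_one]
      field_simp
    linarith [hb2, this ▸ hb2]
lemma integrableOn_B {α : ℝ} (hα0 : 0 < α) (hα1 : α < 1) {z : ℂ} (hz : z ∈ Complex.slitPlane) :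
    IntegrableOn (fun ξ : ℝ => ((|ξ| ^ (2*α-1) : ℝ) : ℂ) / ((ξ:ℂ)^2 + z)) (Ioi 0) := by
  obtain ⟨δ, hδ, hb⟩ := exists_delta hz
  have hzb : z ∈ Metric.ball z δ := Metric.mem_ball_self hδ
  have hden : ∀ ξ : ℝ, δ ≤ ‖(ξ:ℂ)^2 + z‖ := by
    intro ξ
    have := hb (ξ^2) (sq_nonneg ξ) z hzb
    rwa [Complex.ofReal_pow] at this
  set T : ℝ := max 1 (2 * (‖z‖ + δ)) with hTdef
  have hT : 0 < T := lt_of_lt_of_le one_pos (le_max_left _ _)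
  have hmeas : AEStronglyMeasurable (fun ξ : ℝ => ((|ξ| ^ (2*α-1) : ℝ) : ℂ) / ((ξ:ℂ)^2 + z))
      (volume.restrict (Ioi 0)) := by
    apply ContinuousOn.aestronglyMeasurable ?_ measurableSet_Ioi
    apply ContinuousOn.div
    · apply Complex.continuous_ofReal.comp_continuousOn
      apply ContinuousOn.rpow_const (continuous_abs.continuousOn)
      intro ξ hξ
      exact Or.inl (abs_ne_zero.mpr (ne_of_gt hξ))
    · exact ((Complex.continuous_ofReal.pow 2).add continuous_const).continuousOn
    · intro ξ _
      intro h0; have := hden ξ; rw [h0, norm_zero] at this; linarith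
  apply Integrable.mono' (integrable_if_bound (β := 2*α-1) (γ := 2*α-3) (c := δ⁻¹) (b := 2)
    (by linarith) (by linarith) hT) hmeas
  rw [ae_restrict_iff' measurableSet_Ioi]
  apply ae_of_all
  intro t ht
  have ht0 : (0:ℝ) < t := ht
  have habs : |t| = t := abs_of_pos ht0
  rw [habs]
  by_cases hle : t ≤ T
  · rw [if_pos hle]
    exact norm_div_le_aux ht0 hδ (hden t)
  · rw [if_neg hle]
    push_neg at hle
    have ht1 : (1:ℝ) ≤ t := le_trans (le_max_left _ _) hle.le
    have h2z : 2 * ‖z‖ ≤ t^2 := by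
      have h1 : 2 * (‖z‖ + δ) ≤ T := le_max_right _ _
      nlinarith [norm_nonneg z]
    have hlow : t^2/2 ≤ ‖(t:ℂ)^2 + z‖ := by
      have := norm_lower z h2z
      rwa [Complex.ofReal_pow] at this
    have hb2 : ‖((t ^ (2*α-1) : ℝ) : ℂ) / ((t:ℂ)^2 + z)‖ ≤ t ^ (2*α-1) * (t^2/2)⁻¹ :=
      norm_div_le_aux ht0 (by positivity) hlow
    have hkey : t ^ (2*α-1) * (t^2/2)⁻¹ = 2 * t ^ (2*α-3) := by
      rw [show 2*α - 3 = (2*α-1) + (-2 : ℤ) by push_cast; ring, Real.rpow_add ht0,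
        Real.rpow_intCast, zpow_neg]
      field_simp
    linarith [hb2, hkey ▸ hb2]

lemma step1 {α : ℝ} (hα0 : 0 < α) (hα1 : α < 1) {z : ℂ} (hz : z ∈ Complex.slitPlane) :
    ∫ ξ : ℝ, ((|ξ| ^ (2*α - 1) : ℝ) : ℂ) / ((ξ:ℂ)^2 + z)
      = ∫ t in Ioi 0, ((t ^ (α-1) : ℝ) : ℂ) / ((t:ℂ) + z) := by
  set f : ℝ → ℂ := fun ξ => ((|ξ| ^ (2*α - 1) : ℝ) : ℂ) / ((ξ:ℂ)^2 + z) with hf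
  have hfeven : ∀ ξ : ℝ, f (-ξ) = f ξ := by
    intro ξ; simp only [hf, abs_neg, Complex.ofReal_neg, neg_sq]
  have hIoi : IntegrableOn f (Ioi 0) := integrableOn_B hα0 hα1 hz
  have hIio : IntegrableOn f (Iio 0) := by
    have A : MeasurableEmbedding fun x : ℝ => -x :=
      (Homeomorph.neg ℝ).isClosedEmbedding.measurableEmbedding
    have h1 : IntegrableOn (fun x => f (-x)) (Iio 0) := by
      rw [IntegrableOn, ← Measure.map_neg_eq_self (volume : Measure ℝ),
        Measure.restrict_map A.measurable measurableSet_Iio, A.integrable_map_iff]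
      simpa [Function.comp_def, IntegrableOn] using hIoi
    exact h1.congr_fun (fun x _ => hfeven x) measurableSet_Iio
  have hIic : IntegrableOn f (Iic 0) := by
    rwa [integrableOn_Iic_iff_integrableOn_Iio]
  have hsplit : ∫ ξ : ℝ, f ξ = (∫ ξ in Iic 0, f ξ) + ∫ ξ in Ioi 0, f ξ :=
    (intervalIntegral.integral_Iic_add_Ioi hIic hIoi).symm
  have hneg : ∫ ξ in Iic 0, f ξ = ∫ ξ in Ioi 0, f ξ := by
    rw [← neg_zero, ← integral_comp_neg_Iic]
    simp_rw [hfeven]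
    rw [neg_zero]
  have h2 : ∫ ξ : ℝ, f ξ = 2 * ∫ ξ in Ioi 0, f ξ := by
    rw [hsplit, hneg]; ring
  rw [h2]
  -- substitution t = ξ^2
  have hsub := MeasureTheory.integral_comp_rpow_Ioi
    (fun t : ℝ => ((t ^ (α-1) : ℝ) : ℂ) / ((t:ℂ) + z)) (p := 2) two_ne_zero
  rw [← hsub, ← MeasureTheory.integral_const_mul]
  apply setIntegral_congr_fun measurableSet_Ioi
  intro x hx
  have hx0 : (0:ℝ) < x := hx
  have h2x : x ^ (2:ℝ) = x ^ 2 := by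
    rw [show (2:ℝ) = ((2:ℕ):ℝ) by norm_num, Real.rpow_natCast]
  simp only [hf, abs_of_pos hx0]
  rw [Complex.real_smul, h2x]
  have hnum : ((x^2 : ℝ)) ^ (α - 1) = x ^ (2*α - 2) := by
    rw [← h2x, ← Real.rpow_mul hx0.le]; norm_num; ring_nf
  rw [hnum]
  have hx21 : x ^ ((2:ℝ) - 1) = x := by norm_num
  rw [hx21]
  have hpow : x * x ^ (2*α - 2) = x ^ (2*α-1) := by
    rw [show 2*α - 1 = 1 + (2*α - 2) by ring, Real.rpow_add hx0, Real.rpow_one]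
  push_cast [Complex.ofReal_pow]
  rw [← hpow]
  field_simp
  push_cast
  ring_nf
  norm_num
lemma beta_eval {α : ℝ} (hα0 : 0 < α) (hα1 : α < 1) :
    ∫ u in Ioo (0:ℝ) 1, u ^ (α-1) * (1-u) ^ (-α) = Real.pi / Real.sin (α * Real.pi) := by
  have h1α : (0:ℝ) < 1 - α := by linarith
  -- complex beta
  have hbeta := Complex.Gamma_mul_Gamma_eq_betaIntegral
    (s := (α:ℂ)) (t := ((1 - α : ℝ):ℂ)) (by simpa using hα0) (by simpa using h1α)
  rw [show (α:ℂ) + ((1-α:ℝ):ℂ) = 1 by push_cast; ring, Complex.Gamma_one, one_mul] at hbeta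
  have hcongr : Complex.betaIntegral (α:ℂ) ((1-α:ℝ):ℂ)
      = ((∫ u in (0:ℝ)..1, u ^ (α-1) * (1-u) ^ (-α) : ℝ) : ℂ) := by
    rw [Complex.betaIntegral, ← intervalIntegral.integral_ofReal]
    apply intervalIntegral.integral_congr
    intro x hx
    rw [uIcc_of_le zero_le_one] at hx
    simp only
    have hx0 : 0 ≤ x := hx.1
    have hx1 : 0 ≤ 1 - x := by linarith [hx.2]
    rw [show ((x:ℂ)) ^ ((α:ℂ) - 1) = (x:ℂ) ^ (((α - 1 : ℝ)):ℂ) by norm_num,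
      show (1 - (x:ℂ)) ^ (((1-α:ℝ):ℂ) - 1) = (((1-x:ℝ)):ℂ) ^ (((-α : ℝ)):ℂ) by push_cast; ring_nf,
      ← Complex.ofReal_cpow hx0, ← Complex.ofReal_cpow hx1]
    push_cast
    ring
  have hreal : Complex.Gamma (α:ℂ) * Complex.Gamma ((1-α:ℝ):ℂ)
      = ((Real.Gamma α * Real.Gamma (1-α) : ℝ) : ℂ) := by
    rw [Complex.Gamma_ofReal, Complex.Gamma_ofReal]; push_cast; ring
  rw [hreal, hcongr] at hbeta
  have := Complex.ofReal_inj.mp hbeta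
  rw [Real.Gamma_mul_Gamma_one_sub] at this
  rw [intervalIntegral.integral_of_le zero_le_one, integral_Ioc_eq_integral_Ioo] at this
  rw [← this, mul_comm α Real.pi]
lemma cov {α : ℝ} (hα0 : 0 < α) (hα1 : α < 1) :
    ∫ t in Ioi (0:ℝ), t ^ (α-1) / (1 + t) = Real.pi / Real.sin (α * Real.pi) := by
  have himg : (fun u : ℝ => u / (1 - u)) '' Ioo 0 1 = Ioi 0 := by
    ext t
    constructor
    · rintro ⟨u, hu, rfl⟩
      have h1 : 0 < 1 - u := by linarith [hu.2]
      exact mem_Ioi.mpr (div_pos hu.1 h1)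
    · intro ht
      have ht0 : (0:ℝ) < t := ht
      refine ⟨t / (1 + t), ⟨div_pos ht0 (by linarith), (div_lt_one (by linarith)).mpr (by linarith)⟩, ?_⟩
      field_simp
      ring
  have hderiv : ∀ u ∈ Ioo (0:ℝ) 1, HasDerivWithinAt (fun u : ℝ => u / (1 - u))
      (((1-u)^2)⁻¹) (Ioo 0 1) u := by
    intro u hu
    have h1 : (1:ℝ) - u ≠ 0 := by have := hu.2; intro h; simp only [sub_eq_zero] at h; linarith
    have := (hasDerivAt_id u).div ((hasDerivAt_const u 1).sub (hasDerivAt_id u)) h1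
    refine this.hasDerivWithinAt.congr_deriv ?_
    simp only [Pi.sub_apply, id]
    ring
  have hinj : InjOn (fun u : ℝ => u / (1 - u)) (Ioo 0 1) := by
    intro u hu v hv h
    have h1 : (1:ℝ) - u ≠ 0 := by have := hu.2; intro hc; simp only [sub_eq_zero] at hc; linarith
    have h2 : (1:ℝ) - v ≠ 0 := by have := hv.2; intro hc; simp only [sub_eq_zero] at hc; linarith
    field_simp at h
    linarith
  have hcov := integral_image_eq_integral_abs_deriv_smul measurableSet_Ioo hderiv hinj
    (fun t : ℝ => t ^ (α-1) / (1 + t))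
  rw [himg] at hcov
  rw [hcov, ← beta_eval hα0 hα1]
  apply setIntegral_congr_fun measurableSet_Ioo
  intro u hu
  have hu0 : 0 < u := hu.1
  have ha : 0 < 1 - u := by linarith [hu.2]
  have h1 : 1 + u / (1 - u) = 1 / (1 - u) := by field_simp; ring
  simp only [smul_eq_mul, h1]
  rw [Real.div_rpow hu0.le ha.le, abs_of_pos (by positivity : (0:ℝ) < ((1-u)^2)⁻¹)]
  have key : (((1-u):ℝ)^2)⁻¹ * ((1-u)^(α-1))⁻¹ * (1-u) = (1-u)^(-α) := by
    have h2 : (((1-u):ℝ)^2)⁻¹ = (1-u)^(-2:ℝ) := by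
      rw [Real.rpow_neg ha.le, ← Real.rpow_natCast (1-u) 2]; norm_num
    have h3 : (((1-u):ℝ)^(α-1))⁻¹ = (1-u)^(-(α-1)) := by rw [Real.rpow_neg ha.le]
    rw [h2, h3]
    rw [show ((1-u):ℝ) ^ (-2:ℝ) * (1-u)^(-(α-1)) * (1-u)
        = (1-u)^((-2:ℝ) + -(α-1)) * (1-u)^(1:ℝ) by rw [← Real.rpow_add ha, Real.rpow_one]]
    rw [← Real.rpow_add ha]
    congr 1
    ring
  calc ((1-u)^2)⁻¹ * (u ^ (α - 1) / (1 - u) ^ (α - 1) / (1 / (1 - u)))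
      = u ^ (α-1) * ((((1-u):ℝ)^2)⁻¹ * ((1-u)^(α-1))⁻¹ * (1-u)) := by
        rw [one_div, div_inv_eq_mul, div_eq_mul_inv]; ring
    _ = u ^ (α-1) * (1-u)^(-α) := by rw [key]
lemma F_pos_real {α : ℝ} (hα0 : 0 < α) (hα1 : α < 1) {x : ℝ} (hx : 0 < x) :
    ∫ t in Ioi (0:ℝ), ((t ^ (α-1) : ℝ) : ℂ) / ((t:ℂ) + (x:ℂ))
      = ((Real.pi / Real.sin (α * Real.pi) : ℝ) : ℂ) * (x:ℂ) ^ ((α:ℂ) - 1) := by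
  have h1 : ∫ t in Ioi (0:ℝ), ((t ^ (α-1) : ℝ) : ℂ) / ((t:ℂ) + (x:ℂ))
      = ((∫ t in Ioi (0:ℝ), t ^ (α-1) / (t + x) : ℝ) : ℂ) := by
    have e : ∫ t in Ioi (0:ℝ), ((t ^ (α-1) : ℝ) : ℂ) / ((t:ℂ) + (x:ℂ))
        = ∫ t in Ioi (0:ℝ), ((t ^ (α-1) / (t + x) : ℝ) : ℂ) := by
      apply setIntegral_congr_fun measurableSet_Ioi
      intro t _
      push_cast
      rfl
    rw [e]
    exact integral_ofReal
  rw [h1]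
  have hscale := MeasureTheory.integral_comp_mul_left_Ioi
    (fun t : ℝ => t ^ (α-1) / (t + x)) 0 hx
  rw [mul_zero] at hscale
  have h2 : ∀ s ∈ Ioi (0:ℝ), (fun t : ℝ => t ^ (α-1) / (t + x)) (x * s)
      = x ^ (α-1) / x * (s ^ (α-1) / (1 + s)) := by
    intro s hs
    have hs0 : (0:ℝ) < s := hs
    simp only
    rw [Real.mul_rpow hx.le hs0.le]
    rw [show x * s + x = x * (1 + s) by ring]
    field_simp
  rw [setIntegral_congr_fun measurableSet_Ioi h2, integral_const_mul] at hscale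
  rw [cov hα0 hα1] at hscale
  -- hscale : x^(α-1)/x * (π / sin (απ)) = x⁻¹ • ∫ t in Ioi 0, t^(α-1)/(t+x)
  have h3 : ∫ t in Ioi (0:ℝ), t ^ (α-1) / (t + x)
      = x ^ (α-1) * (Real.pi / Real.sin (α * Real.pi)) := by
    rw [smul_eq_mul] at hscale
    have := congrArg (fun y => x * y) hscale
    rw [← mul_assoc x x⁻¹, mul_inv_cancel₀ hx.ne', one_mul] at this
    rw [← this]
    field_simp
  rw [h3, Complex.ofReal_mul, Complex.ofReal_cpow hx.le]
  push_cast
  ring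
lemma meas_aux {α : ℝ} {w : ℂ} (hw : ∀ t : ℝ, 0 < t → (t:ℂ) + w ≠ 0) {n : ℕ} :
    AEStronglyMeasurable (fun t : ℝ => ((t ^ (α-1) : ℝ) : ℂ) / ((t:ℂ) + w)^n)
      (volume.restrict (Ioi 0)) := by
  apply ContinuousOn.aestronglyMeasurable ?_ measurableSet_Ioi
  apply ContinuousOn.div
  · exact Complex.continuous_ofReal.comp_continuousOn
      (continuousOn_id.rpow_const (fun t ht => Or.inl (ne_of_gt ht)))
  · exact ((Complex.continuous_ofReal.add continuous_const).pow n).continuousOn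
  · intro t ht
    exact pow_ne_zero n (hw t ht)

lemma F_differentiable {α : ℝ} (hα0 : 0 < α) (hα1 : α < 1) {z₀ : ℂ}
    (hz : z₀ ∈ Complex.slitPlane) :
    DifferentiableAt ℂ (fun z => ∫ t in Ioi (0:ℝ), ((t ^ (α-1) : ℝ) : ℂ) / ((t:ℂ) + z)) z₀ := by
  obtain ⟨δ, hδ, hb⟩ := exists_delta hz
  set T : ℝ := 2 * (‖z₀‖ + δ) with hTdef
  have hT : 0 < T := by positivity
  have hne : ∀ w ∈ Metric.ball z₀ δ, ∀ t : ℝ, 0 < t → (t:ℂ) + w ≠ 0 := by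
    intro w hw t ht h0
    have := hb t ht.le w hw
    rw [h0, norm_zero] at this; linarith
  have hwnorm : ∀ w ∈ Metric.ball z₀ δ, ‖w‖ ≤ ‖z₀‖ + δ := by
    intro w hw
    have h1 : ‖w - z₀‖ < δ := by rwa [Metric.mem_ball, dist_eq_norm] at hw
    calc ‖w‖ = ‖z₀ + (w - z₀)‖ := by ring_nf
    _ ≤ ‖z₀‖ + ‖w - z₀‖ := norm_add_le _ _
    _ ≤ ‖z₀‖ + δ := by linarith
  have key := hasDerivAt_integral_of_dominated_loc_of_deriv_le (μ := volume.restrict (Ioi 0))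
    (F := fun (z : ℂ) (t : ℝ) => ((t ^ (α-1) : ℝ) : ℂ) / ((t:ℂ) + z))
    (F' := fun (z : ℂ) (t : ℝ) => -(((t ^ (α-1) : ℝ) : ℂ)) / ((t:ℂ) + z)^2)
    (x₀ := z₀) (bound := fun t => if t ≤ T then t ^ (α-1) * (δ^2)⁻¹ else 4 * t ^ (α-3))
    (s := Metric.ball z₀ δ) (Metric.ball_mem_nhds z₀ hδ) ?_ (integrableOn_A hα0 hα1 hz) ?_ ?_ ?_ ?_
  · exact key.2.differentiableAt
  · filter_upwards [Metric.ball_mem_nhds z₀ hδ] with w hw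
    exact meas_aux (α := α) (hne w hw) (n := 1) |>.congr (by
      filter_upwards with t using by rw [pow_one])
  · have := meas_aux (α := α) (hne z₀ (Metric.mem_ball_self hδ)) (n := 2)
    exact (this.neg).congr (by
      filter_upwards with t using by simp [neg_div])
  · rw [ae_restrict_iff' measurableSet_Ioi]
    apply ae_of_all
    intro t ht w hw
    have ht0 : (0:ℝ) < t := ht
    have hnn : ‖-(((t ^ (α-1) : ℝ) : ℂ)) / ((t:ℂ) + w)^2‖
        = ‖(((t ^ (α-1) : ℝ) : ℂ)) / ((t:ℂ) + w)^2‖ := by rw [neg_div, norm_neg]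
    rw [hnn]
    by_cases hle : t ≤ T
    · rw [if_pos hle]
      apply norm_div_le_aux ht0 (by positivity)
      rw [norm_pow]
      exact pow_le_pow_left₀ hδ.le (hb t ht0.le w hw) 2
    · rw [if_neg hle]
      push_neg at hle
      have h2w : 2 * ‖w‖ ≤ t := by
        have := hwnorm w hw; rw [hTdef] at hle; linarith
      have hlow := norm_lower w h2w
      have hb2 : ‖(((t ^ (α-1) : ℝ) : ℂ)) / ((t:ℂ) + w)^2‖ ≤ t ^ (α-1) * ((t/2)^2)⁻¹ := by
        apply norm_div_le_aux ht0 (by positivity)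
        rw [norm_pow]
        exact pow_le_pow_left₀ (by linarith) hlow 2
      have hkey : t ^ (α-1) * ((t/2)^2)⁻¹ = 4 * t ^ (α-3) := by
        rw [show α - 3 = (α-1) + (-2 : ℤ) by push_cast; ring, Real.rpow_add ht0,
          Real.rpow_intCast, zpow_neg]
        field_simp
        ring_nf
      linarith [hb2, hkey ▸ hb2]
  · exact integrable_if_bound (by linarith) (by linarith) hT
  · rw [ae_restrict_iff' measurableSet_Ioi]
    apply ae_of_all
    intro t ht w hw
    have ht0 : (0:ℝ) < t := ht
    have hD : HasDerivAt (fun z : ℂ => ((t ^ (α-1) : ℝ) : ℂ) / ((t:ℂ) + z))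
        (-(((t ^ (α-1) : ℝ) : ℂ)) / ((t:ℂ) + w)^2) w := by
      have h1 : HasDerivAt (fun z : ℂ => (t:ℂ) + z) 1 w := (hasDerivAt_id w).const_add (t:ℂ)
      have := (hasDerivAt_const w (((t ^ (α-1) : ℝ) : ℂ))).div h1 (hne w hw t ht0)
      refine this.congr_deriv ?_
      ring
    exact hD

lemma slit_preconnected : IsPreconnected Complex.slitPlane := by
  have hpath : IsPathConnected Complex.slitPlane :=
    ⟨1, Complex.one_mem_slitPlane, fun {y} hy =>
      JoinedIn.of_segment_subset (Complex.starConvex_one_slitPlane.segment_subset hy)⟩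
  exact hpath.isConnected.isPreconnected

lemma F_eq_G {α : ℝ} (hα0 : 0 < α) (hα1 : α < 1) {z : ℂ} (hz : z ∈ Complex.slitPlane) :
    ∫ t in Ioi (0:ℝ), ((t ^ (α-1) : ℝ) : ℂ) / ((t:ℂ) + z)
      = ((Real.pi / Real.sin (α * Real.pi) : ℝ) : ℂ) * z ^ ((α:ℂ) - 1) := by
  set F : ℂ → ℂ := fun z => ∫ t in Ioi (0:ℝ), ((t ^ (α-1) : ℝ) : ℂ) / ((t:ℂ) + z) with hF
  set G : ℂ → ℂ := fun z => ((Real.pi / Real.sin (α * Real.pi) : ℝ) : ℂ) * z ^ ((α:ℂ) - 1)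
    with hG
  have hFan : AnalyticOnNhd ℂ F Complex.slitPlane := by
    apply DifferentiableOn.analyticOnNhd ?_ Complex.isOpen_slitPlane
    exact fun w hw => (F_differentiable hα0 hα1 hw).differentiableWithinAt
  have hGan : AnalyticOnNhd ℂ G Complex.slitPlane := by
    apply DifferentiableOn.analyticOnNhd ?_ Complex.isOpen_slitPlane
    intro w hw
    exact (((differentiableAt_id.cpow (differentiableAt_const _) hw)).const_mul
      _).differentiableWithinAt
  have hfreq : ∃ᶠ w in nhdsWithin (1:ℂ) {(1:ℂ)}ᶜ, F w = G w := by
    have htend : Tendsto (fun n : ℕ => ((1 + 1/(n+1) : ℝ) : ℂ)) atTop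
        (nhdsWithin (1:ℂ) {(1:ℂ)}ᶜ) := by
      apply tendsto_nhdsWithin_of_tendsto_nhds_of_eventually_within
      · have h0 : Tendsto (fun n : ℕ => (1 + 1/(n+1) : ℝ)) atTop (nhds 1) := by
          have := tendsto_one_div_add_atTop_nhds_zero_nat (𝕜 := ℝ)
          have := this.const_add (1:ℝ)
          simpa using this
        have h1 := (Complex.continuous_ofReal.tendsto (1:ℝ)).comp h0
        simpa [Function.comp_def] using h1
      · apply Eventually.of_forall
        intro n
        simp only [mem_compl_iff, mem_singleton_iff]
        intro hc
        have : (1 + 1/(n+1) : ℝ) = 1 := by exact_mod_cast hc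
        have hn : (0:ℝ) < 1/(n+1) := by positivity
        linarith
    apply htend.frequently
    apply Frequently.of_forall
    intro n
    have hx : (0:ℝ) < 1 + 1/(n+1) := by positivity
    exact F_pos_real hα0 hα1 hx
  have hEq := hFan.eqOn_of_preconnected_of_frequently_eq hGan slit_preconnected
    Complex.one_mem_slitPlane hfreq
  exact hEq hz

end Stmt0Aux


/-- Lemma 2.2 of the paper: for `0 < α < 1`, `η ≥ 0` and `λ ∈ ℂ` with
`Re λ + η > 0` or `Im λ ≠ 0`,
`∫_ℝ |ξ|^{2α−1} / (ξ² + η + λ) dξ = (π / sin(απ)) (η + λ)^{α−1}`. -/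
theorem stmt_0 (α η : ℝ) (hα0 : 0 < α) (hα1 : α < 1) (hη : 0 ≤ η)
    (lam : ℂ) (hlam : 0 < lam.re + η ∨ lam.im ≠ 0) :
    ∫ ξ : ℝ, ((|ξ| ^ (2 * α - 1) : ℝ) : ℂ) / ((ξ : ℂ) ^ 2 + (η : ℂ) + lam)
      = ((Real.pi / Real.sin (α * Real.pi) : ℝ) : ℂ) * ((η : ℂ) + lam) ^ ((α : ℂ) - 1) := by
  have hzslit : (η : ℂ) + lam ∈ Complex.slitPlane := by
    rcases hlam with h | h
    · left; simp only [Complex.add_re, Complex.ofReal_re]; linarith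
    · right; simpa using h
  have hstep1 : (∫ ξ : ℝ, ((|ξ| ^ (2 * α - 1) : ℝ) : ℂ) / ((ξ : ℂ) ^ 2 + (η : ℂ) + lam))
      = ∫ t in Set.Ioi (0:ℝ), ((t ^ (α-1) : ℝ) : ℂ) / ((t:ℂ) + ((η : ℂ) + lam)) := by
    rw [← step1 hα0 hα1 hzslit]
    congr 1
    funext ξ
    rw [add_assoc]
  rw [hstep1]
  exact F_eq_G hα0 hα1 hzslit
end

section
/- Let 0 < α < 1, let U : [0, ∞) → ℝ be bounded and continuous, and for ξ ∈ ℝ and t ≥ 0 set φ(t, ξ) = μ(ξ) ∫₀ᵗ e^{−ξ²(t − s)} U(s) ds, where μ(ξ) = |ξ|^{(2α−1)/2}. Then for every t > 0 the function ξ ↦ μ(ξ) φ(t, ξ) is integrable on ℝ and π^{−1} sin(απ) ∫_ℝ μ(ξ) φ(t, ξ) dξ = (1 / Γ(1 − α)) ∫₀ᵗ (t − s)^{−α} U(s) ds, i.e. the output O(t) = π^{−1} sin(απ) ∫_ℝ μ(ξ) φ(t, ξ) dξ equals the Riemann–Liouville fractional integral I^{1−α} U(t). -/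
open MeasureTheory

open Set Real in
lemma my_integrable_comp_abs {f : ℝ → ℝ} (hf : IntegrableOn f (Set.Ioi 0)) :
    Integrable (fun x => f |x|) := by
  have hIoi : IntegrableOn (fun x => f |x|) (Set.Ioi 0) :=
    hf.congr_fun (fun x hx => by rw [abs_of_pos hx]) measurableSet_Ioi
  have hIic : IntegrableOn (fun x => f |x|) (Set.Iic 0) := by
    rw [← Measure.map_neg_eq_self (volume : Measure ℝ)]
    have m : MeasurableEmbedding fun x : ℝ => -x := (Homeomorph.neg ℝ).measurableEmbedding
    rw [m.integrableOn_map_iff]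
    simp_rw [Function.comp_def, abs_neg, Set.neg_preimage, Set.neg_Iic, neg_zero]
    exact (integrableOn_Ici_iff_integrableOn_Ioi).mpr hIoi
  have h := hIic.union hIoi
  rwa [Set.Iic_union_Ioi, integrableOn_univ] at h

/-- Theorem 2.1 of the paper (Mbodje's input–output realization): for `0 < α < 1`,
`U` bounded and continuous on `[0,∞)`, and `φ(t,ξ) = μ(ξ) ∫₀ᵗ e^{−ξ²(t−s)} U(s) ds`
with `μ(ξ) = |ξ|^{(2α−1)/2}`, for every `t > 0` the function `ξ ↦ μ(ξ) φ(t,ξ)` is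
integrable on `ℝ` and
`π⁻¹ sin(απ) ∫_ℝ μ(ξ) φ(t,ξ) dξ = (1/Γ(1−α)) ∫₀ᵗ (t−s)^{−α} U(s) ds`. -/
theorem stmt_4 (α : ℝ) (hα0 : 0 < α) (hα1 : α < 1)
    (U : ℝ → ℝ) (hUc : ContinuousOn U (Set.Ici 0))
    (hUb : ∃ C : ℝ, ∀ t : ℝ, 0 ≤ t → |U t| ≤ C)
    (φ : ℝ → ℝ → ℝ)
    (hφ : ∀ t ξ, φ t ξ = |ξ| ^ ((2 * α - 1) / 2)
      * ∫ s in (0 : ℝ)..t, Real.exp (-ξ ^ 2 * (t - s)) * U s) :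
    ∀ t > (0 : ℝ),
      Integrable (fun ξ : ℝ => |ξ| ^ ((2 * α - 1) / 2) * φ t ξ) ∧
      Real.pi⁻¹ * Real.sin (α * Real.pi)
          * ∫ ξ : ℝ, |ξ| ^ ((2 * α - 1) / 2) * φ t ξ
        = (1 / Real.Gamma (1 - α)) * ∫ s in (0 : ℝ)..t, (t - s) ^ (-α) * U s := by
  obtain ⟨C, hC⟩ := hUb
  intro t ht
  set p : ℝ := 2 * α - 1 with hp
  have hp1 : (-1 : ℝ) < p := by rw [hp]; linarith
  have hGα : 0 < Real.Gamma α := Real.Gamma_pos_of_pos hα0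
  -- μ(ξ)² = |ξ|^p
  have hμsq : ∀ ξ : ℝ, |ξ| ^ ((2 * α - 1) / 2) * |ξ| ^ ((2 * α - 1) / 2) = |ξ| ^ p := by
    intro ξ
    have h1 : |ξ| ^ ((2 * α - 1) / 2) * |ξ| ^ ((2 * α - 1) / 2)
        = (|ξ| ^ ((2 * α - 1) / 2)) ^ (2 : ℕ) := (sq _).symm
    rw [h1, ← Real.rpow_two, ← Real.rpow_mul (abs_nonneg ξ)]
    congr 1
    rw [hp]; ring
  -- key integrability over ℝ
  have hJ : ∀ c : ℝ, 0 < c →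
      Integrable (fun ξ : ℝ => |ξ| ^ p * Real.exp (-ξ ^ 2 * c)) := by
    intro c hc
    have h1 : IntegrableOn (fun x : ℝ => x ^ p * Real.exp (-c * x ^ 2)) (Set.Ioi 0) :=
      integrableOn_rpow_mul_exp_neg_mul_sq hc hp1
    refine (my_integrable_comp_abs h1).congr ?_
    filter_upwards with x
    show |x| ^ p * Real.exp (-c * |x| ^ 2) = _
    rw [sq_abs, show -c * x ^ 2 = -x ^ 2 * c by ring]
  -- key integral over ℝ
  have hK : ∀ c : ℝ, 0 < c →
      (∫ ξ : ℝ, |ξ| ^ p * Real.exp (-ξ ^ 2 * c)) = Real.Gamma α * c ^ (-α) := by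
    intro c hc
    have h3 : (∫ x in Set.Ioi (0 : ℝ), x ^ p * Real.exp (-c * x ^ 2))
        = c ^ (-(p + 1) / 2) * (1 / 2) * Real.Gamma ((p + 1) / 2) := by
      rw [← integral_rpow_mul_exp_neg_mul_rpow two_pos hp1 hc]
      refine setIntegral_congr_fun measurableSet_Ioi fun x _ => ?_
      rw [Real.rpow_two]
    calc (∫ ξ : ℝ, |ξ| ^ p * Real.exp (-ξ ^ 2 * c))
        = ∫ x : ℝ, (fun y : ℝ => y ^ p * Real.exp (-c * y ^ 2)) |x| := by
          congr 1; funext x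
          show _ = |x| ^ p * Real.exp (-c * |x| ^ 2)
          rw [sq_abs, show -c * x ^ 2 = -x ^ 2 * c by ring]
      _ = 2 * ∫ x in Set.Ioi (0 : ℝ), x ^ p * Real.exp (-c * x ^ 2) := integral_comp_abs (f := fun y : ℝ => y ^ p * Real.exp (-c * y ^ 2))
      _ = Real.Gamma α * c ^ (-α) := by
          rw [h3, show (p + 1) / 2 = α by rw [hp]; ring,
            show -(p + 1) / 2 = -α by rw [hp]; ring]
          ring
  set ν : Measure ℝ := volume.restrict (Set.Ioc 0 t) with hν
  set f : ℝ × ℝ → ℝ := fun q => |q.2| ^ p * Real.exp (-q.2 ^ 2 * (t - q.1)) * U q.1 with hfdef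
  -- a.e. facts on ν
  have hνt : ∀ᵐ s ∂ν, s ≠ t := by
    rw [ae_iff]
    have he : {s : ℝ | ¬s ≠ t} = {t} := by ext s; simp
    rw [he, hν, Measure.restrict_apply (measurableSet_singleton t)]
    exact measure_mono_null Set.inter_subset_left Real.volume_singleton
  have hmem : ∀ᵐ s ∂ν, s ∈ Set.Ioc 0 t := by
    rw [hν]; exact ae_restrict_mem measurableSet_Ioc
  have hS : ∀ᵐ s ∂ν, 0 < t - s ∧ 0 < s := by
    filter_upwards [hmem, hνt] with s hs hst
    exact ⟨sub_pos.2 (lt_of_le_of_ne hs.2 hst), hs.1⟩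
  -- measurability
  have hUm : AEStronglyMeasurable U ν := by
    rw [hν]
    exact (hUc.mono fun x hx => le_of_lt hx.1).aestronglyMeasurable measurableSet_Ioc
  have hfm : AEStronglyMeasurable f (ν.prod volume) := by
    have h1 : Measurable fun q : ℝ × ℝ => |q.2| ^ p * Real.exp (-q.2 ^ 2 * (t - q.1)) := by
      fun_prop
    exact (h1.aestronglyMeasurable.mul hUm.comp_fst)
  -- product integrability
  have hfint : Integrable f (ν.prod volume) := by
    refine (integrable_prod_iff hfm).mpr ⟨?_, ?_⟩
    · filter_upwards [hS] with s hs
      exact (hJ (t - s) hs.1).mul_const (U s)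
    · have hgi : Integrable (fun s => C * (Real.Gamma α * (t - s) ^ (-α))) ν := by
        have h4 : IntervalIntegrable (fun s : ℝ => (t - s) ^ (-α)) volume 0 t := by
          have h5 : IntervalIntegrable (fun x : ℝ => x ^ (-α)) volume 0 t :=
            intervalIntegral.intervalIntegrable_rpow' (by linarith)
          have h6 := h5.comp_sub_left t
          simpa using h6.symm
        have h7 : IntegrableOn (fun s : ℝ => (t - s) ^ (-α)) (Set.Ioc 0 t) :=
          (intervalIntegrable_iff_integrableOn_Ioc_of_le ht.le).mp h4
        rw [hν]
        exact (h7.const_mul (Real.Gamma α)).const_mul C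
      refine hgi.mono' hfm.norm.integral_prod_right' ?_
      filter_upwards [hS] with s hs
      have hnorm : (fun ξ => ‖f (s, ξ)‖)
          = fun ξ => |ξ| ^ p * Real.exp (-ξ ^ 2 * (t - s)) * |U s| := by
        funext ξ
        rw [hfdef]
        simp [abs_mul, abs_of_nonneg (Real.rpow_nonneg (abs_nonneg ξ) p),
          abs_of_nonneg (Real.exp_pos _).le]
      have hU' : |U s| ≤ C := hC s hs.2.le
      have hx : (0 : ℝ) ≤ (t - s) ^ (-α) := Real.rpow_nonneg hs.1.le (-α)
      rw [hnorm, integral_mul_const, hK _ hs.1, Real.norm_eq_abs,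
        abs_of_nonneg (mul_nonneg (mul_nonneg hGα.le hx) (abs_nonneg _))]
      nlinarith [mul_le_mul_of_nonneg_left hU' (mul_nonneg hGα.le hx)]
  -- pointwise rewriting of the integrand
  have hplug : ∀ ξ : ℝ, |ξ| ^ ((2 * α - 1) / 2) * φ t ξ = ∫ s, f (s, ξ) ∂ν := by
    intro ξ
    rw [hφ, ← mul_assoc, hμsq, intervalIntegral.integral_of_le ht.le, ← hν,
      ← integral_const_mul]
    simp only [hfdef, mul_assoc]
  -- integrability of the LHS
  have hint : Integrable (fun ξ : ℝ => |ξ| ^ ((2 * α - 1) / 2) * φ t ξ) := by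
    refine hfint.integral_prod_right.congr ?_
    filter_upwards with ξ
    exact (hplug ξ).symm
  refine ⟨hint, ?_⟩
  -- value of the inner s-integral after swapping
  have hsval : (∫ s, (∫ ξ : ℝ, f (s, ξ)) ∂ν)
      = Real.Gamma α * ∫ s in Set.Ioc (0 : ℝ) t, (t - s) ^ (-α) * U s := by
    rw [← integral_const_mul, ← hν]
    refine integral_congr_ae ?_
    filter_upwards [hS] with s hs
    have : (∫ ξ : ℝ, f (s, ξ))
        = ∫ ξ : ℝ, |ξ| ^ p * Real.exp (-ξ ^ 2 * (t - s)) * U s := rfl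
    rw [this, integral_mul_const, hK _ hs.1]
    ring
  have hLHS : (∫ ξ : ℝ, |ξ| ^ ((2 * α - 1) / 2) * φ t ξ)
      = Real.Gamma α * ∫ s in Set.Ioc (0 : ℝ) t, (t - s) ^ (-α) * U s := by
    rw [integral_congr_ae (Filter.Eventually.of_forall hplug),
      ← integral_integral_swap hfint, hsval]
  rw [hLHS, intervalIntegral.integral_of_le ht.le]
  -- reflection formula bookkeeping
  have hπ : (0 : ℝ) < Real.pi := Real.pi_pos
  have hsin : 0 < Real.sin (α * Real.pi) :=
    Real.sin_pos_of_pos_of_lt_pi (by positivity) (by nlinarith)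
  have hΓ1 : 0 < Real.Gamma (1 - α) := Real.Gamma_pos_of_pos (by linarith)
  have hrefl := Real.Gamma_mul_Gamma_one_sub α
  rw [mul_comm Real.pi α, eq_div_iff hsin.ne'] at hrefl
  have key : Real.pi⁻¹ * Real.sin (α * Real.pi) * Real.Gamma α = 1 / Real.Gamma (1 - α) := by
    field_simp
    rw [mul_comm Real.pi α]
    linarith [hrefl]
  linear_combination (∫ s in Set.Ioc (0 : ℝ) t, (t - s) ^ (-α) * U s) * key
end

section
/- Let 0 < α < 1, η ≥ 0, let U : [0, ∞) → ℝ be bounded and continuous, and for ξ ∈ ℝ and t ≥ 0 set φ(t, ξ) = μ(ξ) ∫₀ᵗ e^{−(ξ² + η)(t − s)} U(s) ds, where μ(ξ) = |ξ|^{(2α−1)/2}. Then for every t > 0 the function ξ ↦ μ(ξ) φ(t, ξ) is integrable on ℝ and π^{−1} sin(απ) ∫_ℝ μ(ξ) φ(t, ξ) dξ = (1 / Γ(1 − α)) ∫₀ᵗ e^{−η(t − s)} (t − s)^{−α} U(s) ds, i.e. the output equals the exponentially weighted fractional integral I^{1−α, η} U(t). -/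
open MeasureTheory

lemma gauss_moment {α b : ℝ} (hα0 : 0 < α) (hb : 0 < b) :
    ∫ x : ℝ, |x| ^ (2*α - 1) * Real.exp (-b * x ^ 2) = b ^ (-α) * Real.Gamma α := by
  have h1 : (∫ x : ℝ, |x| ^ (2*α - 1) * Real.exp (-b * x ^ 2))
      = 2 * ∫ x in Set.Ioi (0:ℝ), x ^ (2*α - 1) * Real.exp (-b * x ^ 2) := by
    rw [← integral_comp_abs (f := fun x => x ^ (2*α - 1) * Real.exp (-b * x ^ 2))]
    congr 1
    ext x
    rw [sq_abs]
  have h2 : (∫ x in Set.Ioi (0:ℝ), x ^ (2*α - 1) * Real.exp (-b * x ^ 2))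
      = ∫ x in Set.Ioi (0:ℝ), x ^ (2*α - 1) * Real.exp (-b * x ^ (2:ℝ)) := by
    refine setIntegral_congr_fun measurableSet_Ioi (fun x hx => ?_)
    rw [← Real.rpow_natCast x 2]
    norm_num
  rw [h1, h2, integral_rpow_mul_exp_neg_mul_rpow two_pos (by linarith) hb]
  have e1 : (2*α - 1 + 1) / 2 = α := by ring
  have e2 : -(2*α - 1 + 1) / 2 = -α := by ring
  rw [e1, e2]
  ring

lemma gauss_int {α b : ℝ} (hα0 : 0 < α) (hb : 0 < b) :
    Integrable (fun x : ℝ => |x| ^ (2*α - 1) * Real.exp (-b * x ^ 2)) := by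
  set g : ℝ → ℝ := fun x => |x| ^ (2*α - 1) * Real.exp (-b * x ^ 2) with hg
  have hs : IntegrableOn g (Set.Ioi 0) := by
    refine (integrableOn_rpow_mul_exp_neg_mul_sq hb (by linarith : (-1:ℝ) < 2*α-1)).congr_fun
      (fun x hx => ?_) measurableSet_Ioi
    simp only [hg, abs_of_pos (Set.mem_Ioi.mp hx)]
  have hneg : IntegrableOn g (Set.Iic 0) := by
    rw [← Measure.map_neg_eq_self (volume : Measure ℝ)]
    have m : MeasurableEmbedding fun x : ℝ => -x := (Homeomorph.neg ℝ).measurableEmbedding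
    rw [m.integrableOn_map_iff]
    have h1 : g ∘ (fun x : ℝ => -x) = g := by
      funext x; simp [hg, neg_sq]
    rw [h1]
    have h2 : (fun x : ℝ => -x) ⁻¹' (Set.Iic 0) = Set.Ici 0 := by
      ext x; simp
    rw [h2]
    exact Iff.mpr integrableOn_Ici_iff_integrableOn_Ioi hs
  have := hneg.union hs
  rwa [Set.Iic_union_Ioi, integrableOn_univ] at this

/-- Weighted version of Theorem 2.1 of the paper: for `0 < α < 1`, `η ≥ 0`,
`U` bounded and continuous on `[0,∞)`, and
`φ(t,ξ) = μ(ξ) ∫₀ᵗ e^{−(ξ²+η)(t−s)} U(s) ds` with `μ(ξ) = |ξ|^{(2α−1)/2}`,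
for every `t > 0` the function `ξ ↦ μ(ξ) φ(t,ξ)` is integrable on `ℝ` and
`π⁻¹ sin(απ) ∫_ℝ μ(ξ) φ(t,ξ) dξ = (1/Γ(1−α)) ∫₀ᵗ e^{−η(t−s)} (t−s)^{−α} U(s) ds`,
i.e. the output equals the exponentially weighted fractional integral `I^{1−α,η} U(t)`. -/
theorem stmt_7 (α η : ℝ) (hα0 : 0 < α) (hα1 : α < 1) (hη : 0 ≤ η)
    (U : ℝ → ℝ) (hUc : ContinuousOn U (Set.Ici 0))
    (hUb : ∃ C : ℝ, ∀ t : ℝ, 0 ≤ t → |U t| ≤ C)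
    (φ : ℝ → ℝ → ℝ)
    (hφ : ∀ t ξ, φ t ξ = |ξ| ^ ((2 * α - 1) / 2)
      * ∫ s in (0 : ℝ)..t, Real.exp (-(ξ ^ 2 + η) * (t - s)) * U s) :
    ∀ t > (0 : ℝ),
      Integrable (fun ξ : ℝ => |ξ| ^ ((2 * α - 1) / 2) * φ t ξ) ∧
      Real.pi⁻¹ * Real.sin (α * Real.pi)
          * ∫ ξ : ℝ, |ξ| ^ ((2 * α - 1) / 2) * φ t ξ
        = (1 / Real.Gamma (1 - α))
            * ∫ s in (0 : ℝ)..t, Real.exp (-η * (t - s)) * (t - s) ^ (-α) * U s := by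
  obtain ⟨C, hC⟩ := hUb
  intro t ht
  set ν : Measure ℝ := volume.restrict (Set.Ioc 0 t) with hν
  set F : ℝ × ℝ → ℝ :=
    fun z => |z.1| ^ (2*α - 1) * (Real.exp (-(z.1 ^ 2 + η) * (t - z.2)) * U z.2) with hF
  -- a.e. s in ν is in Ioo 0 t
  have hae : ∀ᵐ s ∂ν, s ∈ Set.Ioo 0 t := by
    have h1 : ∀ᵐ s ∂ν, s ∈ Set.Ioc 0 t := ae_restrict_mem measurableSet_Ioc
    have h2 : ∀ᵐ s ∂ν, s ≠ t := by
      refine ae_restrict_of_ae ?_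
      have ht0 : (volume : Measure ℝ) {t} = 0 := measure_singleton t
      rw [ae_iff]
      simpa using ht0
    filter_upwards [h1, h2] with s hs hne
    exact ⟨hs.1, lt_of_le_of_ne hs.2 hne⟩
  -- measurability of F on the product
  have hU2 : AEStronglyMeasurable U ν := by
    refine ContinuousOn.aestronglyMeasurable (hUc.mono ?_) measurableSet_Ioc
    exact fun x hx => le_of_lt hx.1
  have hFm : AEStronglyMeasurable F (volume.prod ν) := by
    refine AEStronglyMeasurable.mul ?_ (AEStronglyMeasurable.mul ?_ hU2.comp_snd)
    · exact (by fun_prop : Measurable fun z : ℝ × ℝ => |z.1| ^ (2*α-1)).aestronglyMeasurable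
    · exact (by fun_prop : Measurable fun z : ℝ × ℝ =>
        Real.exp (-(z.1 ^ 2 + η) * (t - z.2))).aestronglyMeasurable
  -- decomposition of sections
  have hsec : ∀ s ∈ Set.Ioo (0:ℝ) t, (fun ξ : ℝ => F (ξ, s))
      = fun ξ : ℝ => (Real.exp (-η * (t - s)) * U s) * (|ξ| ^ (2*α - 1)
        * Real.exp (-(t - s) * ξ ^ 2)) := by
    intro s _
    funext ξ
    simp only [hF]
    rw [show (-(ξ ^ 2 + η) * (t - s)) = (-(t-s) * ξ^2) + (-η * (t - s)) by ring, Real.exp_add]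
    ring
  -- integrability of sections
  have hint : ∀ s ∈ Set.Ioo (0:ℝ) t, Integrable (fun ξ : ℝ => F (ξ, s)) := by
    intro s hs
    rw [hsec s hs]
    exact (gauss_int hα0 (sub_pos.2 hs.2)).const_mul _
  -- value of norm-integral of sections
  have hΓ : 0 < Real.Gamma α := Real.Gamma_pos_of_pos hα0
  have hnorm : ∀ s ∈ Set.Ioo (0:ℝ) t, (∫ ξ : ℝ, ‖F (ξ, s)‖)
      = (Real.exp (-η * (t - s)) * |U s|) * ((t - s) ^ (-α) * Real.Gamma α) := by
    intro s hs
    have : (fun ξ : ℝ => ‖F (ξ, s)‖)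
        = fun ξ : ℝ => (Real.exp (-η * (t - s)) * |U s|) * (|ξ| ^ (2*α - 1)
          * Real.exp (-(t - s) * ξ ^ 2)) := by
      have h1 := congrFun (hsec s hs)
      funext ξ
      rw [Real.norm_eq_abs, h1 ξ, abs_mul, abs_mul, abs_mul]
      rw [abs_of_nonneg (Real.exp_pos _).le, abs_of_nonneg (Real.exp_pos _).le,
        abs_of_nonneg (Real.rpow_nonneg (abs_nonneg ξ) _)]
    rw [this, integral_const_mul, gauss_moment hα0 (sub_pos.2 hs.2)]
  -- integrability of the bound
  have hbint : Integrable (fun s : ℝ => (Real.Gamma α * C) * (t - s) ^ (-α)) ν := by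
    have h1 : IntervalIntegrable (fun s : ℝ => (t - s) ^ (-α)) volume 0 t := by
      have := (intervalIntegral.intervalIntegrable_rpow' (by linarith : (-1:ℝ) < -α)
        (a := t - 0) (b := t - t)).comp_sub_left t
      simpa using this
    have h2 : IntegrableOn (fun s : ℝ => (t - s) ^ (-α)) (Set.Ioc 0 t) := by
      rw [intervalIntegrable_iff, Set.uIoc_of_le ht.le] at h1
      exact h1
    exact h2.const_mul _
  -- product integrability
  have hFint : Integrable F (volume.prod ν) := by
    rw [integrable_prod_iff' hFm]
    constructor
    · filter_upwards [hae] with s hs using hint s hs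
    · refine hbint.mono' (hFm.norm.prod_swap.integral_prod_right') ?_
      filter_upwards [hae] with s hs
      have h3 : (0:ℝ) ≤ (t - s) ^ (-α) := Real.rpow_nonneg (by linarith [hs.2]) _
      rw [hnorm s hs, Real.norm_eq_abs,
        abs_of_nonneg (mul_nonneg (mul_nonneg (Real.exp_pos _).le (abs_nonneg _))
          (mul_nonneg h3 hΓ.le))]
      have h1 : Real.exp (-η * (t - s)) ≤ 1 := by
        rw [Real.exp_le_one_iff]
        nlinarith [hs.2]
      have h2 : |U s| ≤ C := hC s hs.1.le
      have h4 : Real.exp (-η * (t - s)) * |U s| ≤ 1 * C := by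
        apply mul_le_mul h1 h2 (abs_nonneg _) zero_le_one
      calc Real.exp (-η * (t - s)) * |U s| * ((t - s) ^ (-α) * Real.Gamma α)
          ≤ (1 * C) * ((t - s) ^ (-α) * Real.Gamma α) := by
            apply mul_le_mul_of_nonneg_right h4 (by positivity)
        _ = Real.Gamma α * C * (t - s) ^ (-α) := by ring
  -- identify the integrand a.e.
  have h0 : ∀ᵐ ξ : ℝ, ξ ≠ (0:ℝ) := by
    rw [ae_iff]
    simpa using measure_singleton (0:ℝ)
  have heq : (fun ξ : ℝ => |ξ| ^ ((2 * α - 1) / 2) * φ t ξ)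
      =ᶠ[ae volume] fun ξ : ℝ => ∫ s, F (ξ, s) ∂ν := by
    filter_upwards [h0] with ξ hξ
    rw [hφ, ← mul_assoc]
    have habs : (0:ℝ) < |ξ| := abs_pos.2 hξ
    rw [← Real.rpow_add habs]
    have : (2 * α - 1) / 2 + (2 * α - 1) / 2 = 2*α - 1 := by ring
    rw [this, intervalIntegral.integral_of_le ht.le, ← integral_const_mul]
  have hInt : Integrable (fun ξ : ℝ => |ξ| ^ ((2 * α - 1) / 2) * φ t ξ) :=
    hFint.integral_prod_left.congr heq.symm
  refine ⟨hInt, ?_⟩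
  -- compute the integral via Fubini
  have hswap : (∫ ξ : ℝ, ∫ s, F (ξ, s) ∂ν) = ∫ s, (∫ ξ : ℝ, F (ξ, s)) ∂ν :=
    integral_integral_swap (f := fun ξ s => F (ξ, s)) hFint
  have hval : (∫ s, (∫ ξ : ℝ, F (ξ, s)) ∂ν)
      = ∫ s, Real.Gamma α * (Real.exp (-η * (t - s)) * (t - s) ^ (-α) * U s) ∂ν := by
    refine integral_congr_ae ?_
    filter_upwards [hae] with s hs
    rw [hsec s hs, integral_const_mul, gauss_moment hα0 (sub_pos.2 hs.2)]
    ring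
  rw [integral_congr_ae heq, hswap, hval, integral_const_mul,
    intervalIntegral.integral_of_le ht.le]
  -- final constants
  have hrefl := Real.Gamma_mul_Gamma_one_sub α
  have hΓ1 : 0 < Real.Gamma (1 - α) := Real.Gamma_pos_of_pos (by linarith)
  have hsin : 0 < Real.sin (α * Real.pi) := by
    apply Real.sin_pos_of_pos_of_lt_pi
    · positivity
    · nlinarith [Real.pi_pos]
  have hπ : (0:ℝ) < Real.pi := Real.pi_pos
  have hkey : Real.pi⁻¹ * Real.sin (α * Real.pi) * Real.Gamma α = 1 / Real.Gamma (1 - α) := by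
    rw [show Real.pi * α = α * Real.pi from mul_comm _ _] at hrefl
    field_simp at hrefl ⊢
    nlinarith [hrefl]
  rw [← mul_assoc, hkey]
end

section
/- Let d, M ∈ ℕ, let K be a symmetric d × d real matrix, let δt > 0, η ≥ 0, 𝔠 ∈ ℝ, and let ξ_ℓ, μ_ℓ ∈ ℝ for ℓ = 1, …, M. Suppose sequences Uⁿ, Vⁿ ∈ ℝ^d and Φ_ℓⁿ ∈ ℝ^d (n ∈ ℕ, ℓ = 1, …, M) satisfy the midpoint (conservative Newmark/Crank–Nicolson) scheme: (U^{n+1} − Uⁿ)/δt = (Vⁿ + V^{n+1})/2; (V^{n+1} − Vⁿ)/δt = −K (Uⁿ + U^{n+1})/2 − 𝔠 Σ_{ℓ=1}^M μ_ℓ (Φ_ℓⁿ + Φ_ℓ^{n+1})/2; and (Φ_ℓ^{n+1} − Φ_ℓⁿ)/δt = −(ξ_ℓ² + η)(Φ_ℓⁿ + Φ_ℓ^{n+1})/2 + μ_ℓ (Vⁿ + V^{n+1})/2 for each ℓ. Define the discrete energy Eⁿ = ½⟨Vⁿ, Vⁿ⟩ + ½⟨Uⁿ, K Uⁿ⟩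 + (𝔠/2) Σ_{ℓ=1}^M ‖Φ_ℓⁿ‖². Then for every n, E^{n+1} − Eⁿ = −δt · 𝔠 Σ_{ℓ=1}^M (ξ_ℓ² + η) ‖(Φ_ℓⁿ + Φ_ℓ^{n+1})/2‖². In particular, if 𝔠 ≥ 0 the discrete energy is nonincreasing. -/
open Finset

/-- Discrete energy dissipation identity (5.11) of the paper for the conservative
midpoint (β-Newmark / Crank–Nicolson) discretization of the Mbodje augmented model. -/
theorem stmt_10 (d M : ℕ) (K : Matrix (Fin d) (Fin d) ℝ) (hK : K.IsSymm)
    (δt : ℝ) (hδt : 0 < δt) (η : ℝ) (hη : 0 ≤ η) (c : ℝ)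
    (ξ μ : Fin M → ℝ)
    (U V : ℕ → Fin d → ℝ) (Φ : Fin M → ℕ → Fin d → ℝ)
    (hU : ∀ n i, (U (n + 1) i - U n i) / δt = (V n i + V (n + 1) i) / 2)
    (hV : ∀ n i, (V (n + 1) i - V n i) / δt =
      -(K.mulVec (fun j => (U n j + U (n + 1) j) / 2)) i
        - c * ∑ ℓ, μ ℓ * ((Φ ℓ n i + Φ ℓ (n + 1) i) / 2))
    (hΦ : ∀ ℓ n i, (Φ ℓ (n + 1) i - Φ ℓ n i) / δt =
      -(ξ ℓ ^ 2 + η) * ((Φ ℓ n i + Φ ℓ (n + 1) i) / 2)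
        + μ ℓ * ((V n i + V (n + 1) i) / 2))
    (E : ℕ → ℝ)
    (hE : ∀ n, E n = (1 / 2) * ∑ i, V n i * V n i
      + (1 / 2) * ∑ i, U n i * K.mulVec (U n) i
      + (c / 2) * ∑ ℓ, ∑ i, (Φ ℓ n i) ^ 2) :
    (∀ n, E (n + 1) - E n =
      -δt * c * ∑ ℓ, (ξ ℓ ^ 2 + η) * ∑ i, ((Φ ℓ n i + Φ ℓ (n + 1) i) / 2) ^ 2) ∧
    (0 ≤ c → ∀ n, E (n + 1) ≤ E n) := by
  have hδ : δt ≠ 0 := ne_of_gt hδt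
  have key : ∀ n, E (n + 1) - E n =
      -δt * c * ∑ ℓ, (ξ ℓ ^ 2 + η) * ∑ i, ((Φ ℓ n i + Φ ℓ (n + 1) i) / 2) ^ 2 := by
    intro n
    have hU1 : ∀ i, U (n+1) i - U n i = δt * ((V n i + V (n+1) i)/2) := by
      intro i
      have h := hU n i
      rw [div_eq_iff hδ] at h
      linear_combination h
    have hV1 : ∀ i, V (n+1) i - V n i =
        δt * (-(∑ j, K i j * ((U n j + U (n+1) j)/2))
          - c * ∑ ℓ, μ ℓ * ((Φ ℓ n i + Φ ℓ (n+1) i)/2)) := by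
      intro i
      have h := hV n i
      simp only [Matrix.mulVec, dotProduct, Pi.neg_apply] at h
      rw [div_eq_iff hδ] at h
      linear_combination h
    have hP1 : ∀ ℓ i, Φ ℓ (n+1) i - Φ ℓ n i =
        δt * (-(ξ ℓ ^ 2 + η) * ((Φ ℓ n i + Φ ℓ (n+1) i)/2)
          + μ ℓ * ((V n i + V (n+1) i)/2)) := by
      intro ℓ i
      have h := hΦ ℓ n i
      rw [div_eq_iff hδ] at h
      linear_combination h
    have t1 : (1/2) * ∑ i, V (n+1) i * V (n+1) i - (1/2) * ∑ i, V n i * V n i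
        = ∑ i, δt * ((-(∑ j, K i j * ((U n j + U (n+1) j)/2))
            - c * ∑ ℓ, μ ℓ * ((Φ ℓ n i + Φ ℓ (n+1) i)/2)) * ((V n i + V (n+1) i)/2)) := by
      rw [Finset.mul_sum, Finset.mul_sum, ← Finset.sum_sub_distrib]
      refine Finset.sum_congr rfl fun i _ => ?_
      linear_combination ((V n i + V (n+1) i)/2) * hV1 i
    have sym' : ∑ i, ∑ j, δt * (U n i * (K i j * ((V n j + V (n+1) j)/2)))
        = ∑ i, ∑ j, δt * (((V n i + V (n+1) i)/2) * (K i j * U n j)) := by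
      rw [Finset.sum_comm]
      refine Finset.sum_congr rfl fun j _ => Finset.sum_congr rfl fun i _ => ?_
      rw [hK.apply j i]
      ring
    have t2 : ∑ i, ∑ j, U (n+1) i * (K i j * U (n+1) j)
        - ∑ i, ∑ j, U n i * (K i j * U n j)
        = ∑ i, ∑ j, (2*δt) * (((V n i + V (n+1) i)/2) * (K i j * ((U n j + U (n+1) j)/2))) := by
      have step : ∑ i, ∑ j, (U (n+1) i * (K i j * U (n+1) j)
            - U n i * (K i j * U n j)
            - (2*δt) * (((V n i + V (n+1) i)/2) * (K i j * ((U n j + U (n+1) j)/2))))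
          = ∑ i, ∑ j, (δt * (U n i * (K i j * ((V n j + V (n+1) j)/2)))
            - δt * (((V n i + V (n+1) i)/2) * (K i j * U n j))) := by
        refine Finset.sum_congr rfl fun i _ => Finset.sum_congr rfl fun j _ => ?_
        linear_combination (K i j * U (n+1) j) * hU1 i + (K i j * U n i) * hU1 j
      simp only [Finset.sum_sub_distrib] at step
      linarith [step, sym']
    have e2 : ∑ i, ∑ j, (2*δt) * (((V n i + V (n+1) i)/2) * (K i j * ((U n j + U (n+1) j)/2)))
        = 2 * ∑ i, ∑ j, δt * (((V n i + V (n+1) i)/2) * (K i j * ((U n j + U (n+1) j)/2))) := by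
      rw [Finset.mul_sum]
      refine Finset.sum_congr rfl fun i _ => ?_
      rw [Finset.mul_sum]
      exact Finset.sum_congr rfl fun j _ => by ring
    have t3 : (c/2) * ∑ ℓ, ∑ i, (Φ ℓ (n+1) i)^2 - (c/2) * ∑ ℓ, ∑ i, (Φ ℓ n i)^2
        = ∑ ℓ, ∑ i, (δt*c) * (-(ξ ℓ^2+η) * ((Φ ℓ n i + Φ ℓ (n+1) i)/2)^2
            + μ ℓ * (((Φ ℓ n i + Φ ℓ (n+1) i)/2) * ((V n i + V (n+1) i)/2))) := by
      rw [Finset.mul_sum, Finset.mul_sum, ← Finset.sum_sub_distrib]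
      refine Finset.sum_congr rfl fun ℓ _ => ?_
      rw [Finset.mul_sum, Finset.mul_sum, ← Finset.sum_sub_distrib]
      refine Finset.sum_congr rfl fun i _ => ?_
      linear_combination (c * ((Φ ℓ n i + Φ ℓ (n+1) i)/2)) * hP1 ℓ i
    have e1 : (∑ i, δt * ((-(∑ j, K i j * ((U n j + U (n+1) j)/2))
            - c * ∑ ℓ, μ ℓ * ((Φ ℓ n i + Φ ℓ (n+1) i)/2)) * ((V n i + V (n+1) i)/2)))
        + (∑ i, ∑ j, δt * (((V n i + V (n+1) i)/2) * (K i j * ((U n j + U (n+1) j)/2))))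
        = ∑ i, ∑ ℓ, (-(δt*c)) * (μ ℓ * (((Φ ℓ n i + Φ ℓ (n+1) i)/2) * ((V n i + V (n+1) i)/2))) := by
      rw [← Finset.sum_add_distrib]
      refine Finset.sum_congr rfl fun i _ => ?_
      rw [show (∑ j, δt * (((V n i + V (n+1) i)/2) * (K i j * ((U n j + U (n+1) j)/2))))
          = (δt * ((V n i + V (n+1) i)/2)) * ∑ j, K i j * ((U n j + U (n+1) j)/2) from by
        rw [Finset.mul_sum]; exact Finset.sum_congr rfl fun j _ => by ring]
      rw [show (∑ ℓ, (-(δt*c)) * (μ ℓ * (((Φ ℓ n i + Φ ℓ (n+1) i)/2) * ((V n i + V (n+1) i)/2))))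
          = (-(δt*c) * ((V n i + V (n+1) i)/2)) * ∑ ℓ, μ ℓ * ((Φ ℓ n i + Φ ℓ (n+1) i)/2) from by
        rw [Finset.mul_sum]; exact Finset.sum_congr rfl fun ℓ _ => by ring]
      ring
    have e3 : (∑ i, ∑ ℓ, (-(δt*c)) * (μ ℓ * (((Φ ℓ n i + Φ ℓ (n+1) i)/2) * ((V n i + V (n+1) i)/2))))
        + (∑ ℓ, ∑ i, (δt*c) * (-(ξ ℓ^2+η) * ((Φ ℓ n i + Φ ℓ (n+1) i)/2)^2
            + μ ℓ * (((Φ ℓ n i + Φ ℓ (n+1) i)/2) * ((V n i + V (n+1) i)/2))))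
        = ∑ ℓ, ∑ i, (-(δt*c)) * ((ξ ℓ^2+η) * ((Φ ℓ n i + Φ ℓ (n+1) i)/2)^2) := by
      rw [Finset.sum_comm, ← Finset.sum_add_distrib]
      refine Finset.sum_congr rfl fun ℓ _ => ?_
      rw [← Finset.sum_add_distrib]
      exact Finset.sum_congr rfl fun i _ => by ring
    have e4 : -δt * c * ∑ ℓ, (ξ ℓ ^ 2 + η) * ∑ i, ((Φ ℓ n i + Φ ℓ (n + 1) i) / 2) ^ 2
        = ∑ ℓ, ∑ i, (-(δt*c)) * ((ξ ℓ^2+η) * ((Φ ℓ n i + Φ ℓ (n+1) i)/2)^2) := by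
      rw [Finset.mul_sum]
      refine Finset.sum_congr rfl fun ℓ _ => ?_
      rw [show (-δt * c) * ((ξ ℓ^2+η) * ∑ i, ((Φ ℓ n i + Φ ℓ (n+1) i)/2)^2)
          = ((-(δt*c)) * (ξ ℓ^2+η)) * ∑ i, ((Φ ℓ n i + Φ ℓ (n+1) i)/2)^2 from by ring]
      rw [Finset.mul_sum]
      exact Finset.sum_congr rfl fun i _ => by ring
    have b2a : ∑ i, U (n+1) i * ∑ j, K i j * U (n+1) j
        = ∑ i, ∑ j, U (n+1) i * (K i j * U (n+1) j) :=
      Finset.sum_congr rfl fun i _ => by rw [Finset.mul_sum]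
    have b2b : ∑ i, U n i * ∑ j, K i j * U n j
        = ∑ i, ∑ j, U n i * (K i j * U n j) :=
      Finset.sum_congr rfl fun i _ => by rw [Finset.mul_sum]
    rw [hE (n+1), hE n]
    simp only [Matrix.mulVec, dotProduct]
    linarith [t1, t2, t3, e1, e2, e3, e4, b2a, b2b]
  refine ⟨key, fun hc n => ?_⟩
  have hS : 0 ≤ ∑ ℓ, (ξ ℓ ^ 2 + η) * ∑ i, ((Φ ℓ n i + Φ ℓ (n + 1) i) / 2) ^ 2 := by
    refine Finset.sum_nonneg fun ℓ _ => mul_nonneg (by positivity)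
      (Finset.sum_nonneg fun i _ => sq_nonneg _)
  have h2 := key n
  nlinarith [mul_nonneg (mul_nonneg hδt.le hc) hS]
end

section
/- Let d ∈ ℕ, let K be a symmetric d × d real matrix and let δt > 0. Suppose sequences Uⁿ, Vⁿ ∈ ℝ^d satisfy the undamped midpoint Newmark scheme: (U^{n+1} − Uⁿ)/δt = (Vⁿ + V^{n+1})/2 and (V^{n+1} − Vⁿ)/δt = −K (Uⁿ + U^{n+1})/2. Define Eⁿ = ½⟨Vⁿ, Vⁿ⟩ + ½⟨Uⁿ, K Uⁿ⟩. Then Eⁿ is constant in n: E^{n+1} = Eⁿ for all n. -/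
open Finset

lemma bsym_aux {d : ℕ} (K : Matrix (Fin d) (Fin d) ℝ) (hK : K.IsSymm)
    (x y : Fin d → ℝ) :
    ∑ i, x i * K.mulVec y i = ∑ i, y i * K.mulVec x i := by
  simp only [Matrix.mulVec, dotProduct, Finset.mul_sum]
  rw [Finset.sum_comm]
  refine Finset.sum_congr rfl fun i _ => Finset.sum_congr rfl fun j _ => ?_
  have h := hK.apply j i
  rw [h]; ring

/-- Energy conservation of the undamped midpoint (β-Newmark with β̃ = 1/4, γ̃ = 1/2)
scheme for `Ü + K U = 0` with `K` symmetric. -/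
theorem stmt_11 (d : ℕ) (K : Matrix (Fin d) (Fin d) ℝ) (hK : K.IsSymm)
    (δt : ℝ) (hδt : 0 < δt)
    (U V : ℕ → Fin d → ℝ)
    (hU : ∀ n i, (U (n + 1) i - U n i) / δt = (V n i + V (n + 1) i) / 2)
    (hV : ∀ n i, (V (n + 1) i - V n i) / δt =
      -(K.mulVec (fun j => (U n j + U (n + 1) j) / 2)) i)
    (E : ℕ → ℝ)
    (hE : ∀ n, E n = (1 / 2) * ∑ i, V n i * V n i
      + (1 / 2) * ∑ i, U n i * K.mulVec (U n) i) :
    ∀ n, E (n + 1) = E n := by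
  intro n
  set W : Fin d → ℝ := fun j => (U n j + U (n + 1) j) / 2 with hW
  -- pointwise difference equations
  have hU' : ∀ i, U (n + 1) i - U n i = δt * (V n i + V (n + 1) i) / 2 := by
    intro i
    have h := hU n i
    field_simp at h
    linarith
  have hV' : ∀ i, V (n + 1) i - V n i = -(δt * K.mulVec W i) := by
    intro i
    have h := hV n i
    field_simp at h
    linarith [h]
  -- mulVec of the midpoint
  have hmid : ∀ i, K.mulVec (U n) i + K.mulVec (U (n + 1)) i = 2 * K.mulVec W i := by
    intro i
    simp only [Matrix.mulVec, dotProduct, hW]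
    rw [← Finset.sum_add_distrib, Finset.mul_sum]
    refine Finset.sum_congr rfl fun j _ => ?_
    ring
  -- kinetic part
  have hkin : ∑ i, V (n + 1) i * V (n + 1) i - ∑ i, V n i * V n i
      = -(δt * ∑ i, (V n i + V (n + 1) i) * K.mulVec W i) := by
    rw [← Finset.sum_sub_distrib, Finset.mul_sum, ← Finset.sum_neg_distrib]
    refine Finset.sum_congr rfl fun i _ => ?_
    have h1 := hV' i
    linear_combination (V (n + 1) i + V n i) * h1
  -- potential part
  have hpot : ∑ i, U (n + 1) i * K.mulVec (U (n + 1)) i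
      - ∑ i, U n i * K.mulVec (U n) i
      = δt * ∑ i, (V n i + V (n + 1) i) * K.mulVec W i := by
    have hB := bsym_aux K hK (U (n + 1)) (U n)
    have e1 : ∀ i, (U (n + 1) i - U n i) *
        (K.mulVec (U (n + 1)) i + K.mulVec (U n) i)
        = (U (n + 1) i * K.mulVec (U (n + 1)) i - U n i * K.mulVec (U n) i)
          + (U (n + 1) i * K.mulVec (U n) i - U n i * K.mulVec (U (n + 1)) i) := by
      intro i; ring
    have e2 : ∑ i, (U (n + 1) i - U n i) *
        (K.mulVec (U (n + 1)) i + K.mulVec (U n) i)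
        = ∑ i, U (n + 1) i * K.mulVec (U (n + 1)) i
          - ∑ i, U n i * K.mulVec (U n) i := by
      simp_rw [e1]
      rw [Finset.sum_add_distrib, Finset.sum_sub_distrib, Finset.sum_sub_distrib,
        hB, bsym_aux K hK (U n) (U (n + 1))]
      ring
    rw [← e2, Finset.mul_sum]
    refine Finset.sum_congr rfl fun i _ => ?_
    have h1 := hU' i
    have h2 := hmid i
    linear_combination (K.mulVec (U (n + 1)) i + K.mulVec (U n) i) * h1
      + (δt * (V n i + V (n + 1) i) / 2) * h2
  rw [hE, hE]
  linarith [hkin, hpot]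
end
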